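/- In the width-3 string flip dynamics, the size of the sector containing a configuration with M particles of type 1 and N - M sites of types 0 and 2 (in some fixed order) is C(N, M): the sector consists of all configurations obtained by placing the M particles at any M of the N positions while keeping the {0,2}-word fixed. -/

import Mathlib

/-- A single flip: the values at two adjacent sites, which differ by exactly 1,
are swapped; all other sites are unchanged. -/
def FlipStep {N k : ℕ} (c c' : Fin N → Fin k) : Prop :=
  ∃ j j' : Fin N, j.val + 1 = j'.val ∧
    ((c j').val = (c j).val + 1 ∨ (c j).val = (c j').val + 1) ∧
    c' j = c j' ∧ c' j' = c j ∧ ∀ i : Fin N, i ≠ j → i ≠ j' → c' i = c i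

/-- Two configurations are in the same sector iff they are related by finitely many flips. -/
def SameSector {N k : ℕ} (c c' : Fin N → Fin k) : Prop :=
  Relation.ReflTransGen FlipStep c c'

open Finset

/-- In the width-3 string flip dynamics, the sector of a configuration with `M` particles
of type 1 (and `N - M` sites of types 0 and 2, in some fixed order) has exactly
`C(N, M)` configurations. -/
def wordOf {N : ℕ} (c : Fin N → Fin 3) : List (Fin 3) := (List.ofFn c).filter (· ≠ 1)



lemma fin3_one (a b : Fin 3) (h : b.val = a.val + 1 ∨ a.val = b.val + 1) : a = 1 ∨ b = 1 := by
  revert h; revert a b; decide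

lemma decomp {N : ℕ} (c : Fin N → Fin 3) (j j' : Fin N) (hjj : j.val + 1 = j'.val) :
    List.ofFn c = (List.ofFn c).take j.val ++ c j :: c j' :: (List.ofFn c).drop (j.val+2) := by
  have hj2 : j.val + 1 < N := hjj ▸ j'.isLt
  have h1 : (List.ofFn c).drop j.val = c j :: (List.ofFn c).drop (j.val+1) := by
    rw [List.drop_eq_getElem_cons (by simp)]
    congr 1
    simp
  have h2 : (List.ofFn c).drop (j.val+1) = c j' :: (List.ofFn c).drop (j.val+2) := by
    rw [List.drop_eq_getElem_cons (by simp; omega)]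
    congr 1
    · simp only [List.getElem_ofFn]; congr 1; ext; simp [← hjj]
  conv_lhs => rw [← List.take_append_drop j.val (List.ofFn c)]
  rw [h1, h2]

lemma flip_word {N : ℕ} {c c' : Fin N → Fin 3} (h : FlipStep c c') : wordOf c' = wordOf c := by
  obtain ⟨j, j', hjj, hdiff, h1, h2, h3⟩ := h
  have e1 : (List.ofFn c').take j.val = (List.ofFn c).take j.val := by
    apply List.ext_getElem (by simp)
    intro i hi1 hi2
    simp only [List.getElem_take, List.getElem_ofFn]
    simp only [List.length_take, List.length_ofFn] at hi1
    apply h3 <;> · intro hh; apply_fun Fin.val at hh; simp at hh; omega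
  have e2 : (List.ofFn c').drop (j.val+2) = (List.ofFn c).drop (j.val+2) := by
    apply List.ext_getElem (by simp)
    intro i hi1 hi2
    simp only [List.getElem_drop, List.getElem_ofFn]
    apply h3 <;> · intro hh; apply_fun Fin.val at hh; simp at hh; omega
  have d1 := decomp c j j' hjj
  have d2 := decomp c' j j' hjj
  rw [h1, h2] at d2
  unfold wordOf
  rw [d1, d2, e1, e2]
  simp only [List.filter_append, List.filter_cons]
  rcases fin3_one _ _ hdiff with ha | hb
  · rw [ha]; simp
  · rw [hb]; simp





def Canon {N : ℕ} (c : Fin N → Fin 3) : Prop := ∀ p q : Fin N, p < q → c q = 1 → c p = 1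

def mOf {N : ℕ} (c : Fin N → Fin 3) : ℕ := ∑ i : Fin N, if c i = 1 then i.val else 0

lemma find_pair_aux {N : ℕ} : ∀ (n : ℕ) (c : Fin N → Fin 3) (p q : Fin N), q.val ≤ n →
    p < q → c q = 1 → c p ≠ 1 →
    ∃ j, ∃ h : j + 1 < N, c ⟨j, Nat.lt_of_succ_lt h⟩ ≠ 1 ∧ c ⟨j+1, h⟩ = 1 := by
  intro n
  induction n with
  | zero =>
    intro c p q hq hpq _ _
    have := Fin.lt_iff_val_lt_val.mp hpq
    omega
  | succ n IH =>
    intro c p q hq hpq h1 h2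
    have hq1 : 1 ≤ q.val := by
      have := Fin.lt_iff_val_lt_val.mp hpq; omega
    set r : Fin N := ⟨q.val - 1, by omega⟩ with hr
    by_cases hcr : c r = 1
    · have hpr : p < r := by
        have hpq' := Fin.lt_iff_val_lt_val.mp hpq
        rcases lt_or_eq_of_le (by omega : p.val ≤ q.val - 1) with h | h
        · exact Fin.lt_iff_val_lt_val.mpr h
        · exfalso; apply h2; rw [show p = r from Fin.ext h]; exact hcr
      exact IH c p r (by simp only [hr]; omega) hpr hcr h2
    · refine ⟨q.val - 1, by omega, hcr, ?_⟩
      have : (⟨q.val - 1 + 1, by omega⟩ : Fin N) = q := Fin.ext (by simp; omega)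
      rw [this]; exact h1

lemma flip_left {N : ℕ} (c : Fin N → Fin 3) (j : ℕ) (h : j+1 < N)
    (h0 : c ⟨j, Nat.lt_of_succ_lt h⟩ ≠ 1) (h1 : c ⟨j+1, h⟩ = 1) :
    ∃ d, FlipStep c d ∧ mOf d + 1 = mOf c := by
  set a : Fin N := ⟨j, Nat.lt_of_succ_lt h⟩ with ha
  set b : Fin N := ⟨j+1, h⟩ with hb
  have hab : a ≠ b := by simp [ha, hb, Fin.ext_iff]
  set d := Function.update (Function.update c a (c b)) b (c a) with hd
  have hda : d a = c b := by rw [hd, Function.update_of_ne hab, Function.update_self]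
  have hdb : d b = c a := by rw [hd, Function.update_self]
  have hdi : ∀ i, i ≠ a → i ≠ b → d i = c i := by
    intro i hia hib
    rw [hd, Function.update_of_ne hib, Function.update_of_ne hia]
  have hdiff : (c b).val = (c a).val + 1 ∨ (c a).val = (c b).val + 1 := by
    have : ∀ x y : Fin 3, x ≠ 1 → y = 1 → ((y).val = x.val + 1 ∨ x.val = y.val + 1) := by decide
    exact this _ _ h0 h1
  refine ⟨d, ⟨a, b, rfl, hdiff, hda, hdb, hdi⟩, ?_⟩
  have key : ∀ g : Fin N → ℕ, ∑ i : Fin N, g i = g a + (g b + ∑ i ∈ (univ.erase a).erase b, g i) := by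
    intro g
    rw [Finset.add_sum_erase _ g (by simp [Finset.mem_erase, hab.symm]),
        Finset.add_sum_erase _ g (by simp)]
  unfold mOf
  rw [key, key (fun i => if c i = 1 then i.val else 0)]
  have e1 : ∑ i ∈ (univ.erase a).erase b, (if d i = 1 then i.val else 0)
      = ∑ i ∈ (univ.erase a).erase b, (if c i = 1 then i.val else 0) := by
    apply Finset.sum_congr rfl
    intro i hi
    simp only [Finset.mem_erase] at hi
    rw [hdi i hi.2.1 hi.1]
  rw [e1, hda, hdb, h1, if_pos rfl, if_neg h0, if_neg h0]
  simp [ha, hb]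
  omega

lemma reach_canon {N : ℕ} : ∀ (n : ℕ) (c : Fin N → Fin 3), mOf c = n →
    ∃ d, Relation.ReflTransGen FlipStep c d ∧ Canon d ∧ wordOf d = wordOf c := by
  intro n
  induction n using Nat.strong_induction_on with
  | _ n IH =>
    intro c hc
    by_cases hC : Canon c
    · exact ⟨c, Relation.ReflTransGen.refl, hC, rfl⟩
    · unfold Canon at hC
      push_neg at hC
      obtain ⟨p, q, hpq, h1, h2⟩ := hC
      obtain ⟨j, hj, hj0, hj1⟩ := find_pair_aux q.val c p q le_rfl hpq h1 h2
      obtain ⟨d, hstep, hm⟩ := flip_left c j hj hj0 hj1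
      obtain ⟨e, hrtg, hce, hwe⟩ := IH (mOf d) (by omega) d rfl
      exact ⟨e, (Relation.ReflTransGen.single hstep).trans hrtg, hce,
        hwe.trans (flip_word hstep)⟩




lemma canon_iff {N : ℕ} {c : Fin N → Fin 3} (hc : Canon c) (i : Fin N) :
    c i = 1 ↔ i.val < (univ.filter (fun j => c j = 1)).card := by
  constructor
  · intro h1
    have hsub : Finset.Iic i ⊆ univ.filter (fun j => c j = 1) := by
      intro q hq
      simp only [Finset.mem_Iic] at hq
      simp only [Finset.mem_filter, Finset.mem_univ, true_and]
      rcases lt_or_eq_of_le hq with h | h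
      · exact hc q i h h1
      · rw [h]; exact h1
    have := Finset.card_le_card hsub
    rw [Fin.card_Iic] at this
    omega
  · intro h
    by_contra hne
    have hsub : univ.filter (fun j => c j = 1) ⊆ Finset.Iio i := by
      intro q hq
      simp only [Finset.mem_filter] at hq
      simp only [Finset.mem_Iio]
      by_contra hq2
      rcases lt_or_eq_of_le (le_of_not_gt hq2) with h' | h'
      · exact hne (hc i q h' hq.2)
      · exact hne (h' ▸ hq.2)
    have := Finset.card_le_card hsub
    rw [Fin.card_Iio] at this
    omega

lemma canon_ofFn {N : ℕ} {c : Fin N → Fin 3} (hc : Canon c) :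
    List.ofFn c = List.replicate ((univ.filter (fun j => c j = 1)).card) 1 ++ wordOf c := by
  set M := (univ.filter (fun j => c j = 1)).card with hMdef
  have hMN : M ≤ N := by
    have := Finset.card_filter_le (univ : Finset (Fin N)) (fun j => c j = 1)
    simpa using this
  have htake : (List.ofFn c).take M = List.replicate M (1 : Fin 3) := by
    apply List.ext_getElem (by simp; omega)
    intro i hi1 hi2
    simp only [List.getElem_take, List.getElem_ofFn, List.getElem_replicate]
    simp only [List.length_take, List.length_ofFn] at hi1
    exact (canon_iff hc _).mpr (by simpa using (by omega : i < M))
  have hdrop : ∀ x ∈ (List.ofFn c).drop M, x ≠ 1 := by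
    intro x hx
    rw [List.mem_iff_getElem] at hx
    obtain ⟨i, hi, hxi⟩ := hx
    simp only [List.getElem_drop, List.getElem_ofFn] at hxi
    simp only [List.length_drop, List.length_ofFn] at hi
    intro hx1
    have := (canon_iff hc ⟨M + i, by omega⟩).mp (hxi ▸ hx1)
    simp only [← hMdef] at this
    omega
  have h1 : List.filter (fun x => decide (x ≠ 1)) (List.replicate M (1 : Fin 3)) = [] := by
    simp
  have h2 : List.filter (fun x => decide (x ≠ 1)) ((List.ofFn c).drop M)
      = (List.ofFn c).drop M :=
    List.filter_eq_self.mpr (fun a ha => by simpa using hdrop a ha)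
  have hword : wordOf c = (List.ofFn c).drop M := by
    unfold wordOf
    conv_lhs => rw [← List.take_append_drop M (List.ofFn c)]
    rw [List.filter_append, htake, h1, h2]
    simp
  rw [hword, ← htake, List.take_append_drop]

lemma canon_unique {N : ℕ} {c d : Fin N → Fin 3} (hc : Canon c) (hd : Canon d)
    (hw : wordOf c = wordOf d) : c = d := by
  have hc' := canon_ofFn hc
  have hd' := canon_ofFn hd
  set Mc := (univ.filter (fun j => c j = 1)).card
  set Md := (univ.filter (fun j => d j = 1)).card
  have hlen := congrArg List.length hc'
  have hlen' := congrArg List.length hd'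
  simp only [List.length_ofFn, List.length_append, List.length_replicate] at hlen hlen'
  have hMM : Mc = Md := by rw [hw] at hlen; omega
  apply List.ofFn_injective
  rw [hc', hd', hw, hMM]



lemma hcons {n : ℕ} (x : Fin 3) (t : Fin n → Fin 3) :
    wordOf (Fin.cons x t) = if x = 1 then wordOf t else x :: wordOf t := by
  unfold wordOf
  rw [List.ofFn_succ]
  have h0 : Fin.cons (α := fun _ => Fin 3) x t 0 = x := rfl
  have hs : (fun i : Fin n => Fin.cons (α := fun _ => Fin 3) x t i.succ) = t := by
    funext i; exact Fin.cons_succ (α := fun _ => Fin 3) x t i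
  rw [h0, hs, List.filter_cons]
  by_cases hx : x = 1 <;> simp [hx]

lemma card_false {α : Type*} [Fintype α] (P : α → Prop) [DecidablePred P]
    (h : ∀ a, ¬ P a) : Fintype.card {a // P a} = 0 :=
  Fintype.card_eq_zero_iff.mpr ⟨fun x => h x.1 x.2⟩

lemma pascal_aux (n L : ℕ) :
    (if L ≤ n then n.choose (n - L) else 0) + (if L + 1 ≤ n then n.choose (n - (L + 1)) else 0)
    = if L + 1 ≤ n + 1 then (n + 1).choose (n + 1 - (L + 1)) else 0 := by
  by_cases h1 : L + 1 ≤ n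
  · rw [if_pos (by omega), if_pos h1, if_pos (by omega)]
    have e1 : n + 1 - (L + 1) = (n - (L + 1)) + 1 := by omega
    have e2 : n - L = (n - (L + 1)) + 1 := by omega
    rw [e1, Nat.choose_succ_succ', ← e2]
    exact Nat.add_comm _ _
  · by_cases h2 : L ≤ n
    · have hL : L = n := by omega
      subst hL
      rw [if_pos le_rfl, if_neg h1, if_pos (by omega)]
      simp
    · rw [if_neg h2, if_neg h1, if_neg (by omega)]

lemma count_word : ∀ (n : ℕ) (w : List (Fin 3)), (1:Fin 3) ∉ w →
    Fintype.card {c : Fin n → Fin 3 // wordOf c = w} =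
    if w.length ≤ n then n.choose (n - w.length) else 0 := by
  intro n
  induction n with
  | zero =>
    intro w hw
    have hnil : ∀ c : Fin 0 → Fin 3, wordOf c = [] := by
      intro c; unfold wordOf; rw [List.ofFn_zero]; rfl
    rcases w with _ | ⟨a, w'⟩
    · simp only [List.length_nil, Nat.le_refl, if_pos, Nat.choose_self]
      exact Fintype.card_eq_one_iff.mpr ⟨⟨Fin.elim0, hnil _⟩,
        fun y => Subtype.ext (funext fun i => i.elim0)⟩
    · rw [if_neg (by simp)]
      exact card_false _ (fun c h => by rw [hnil c] at h; cases h)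
  | succ n IH =>
    intro w hw
    have Ecard : Fintype.card {c : Fin (n+1) → Fin 3 // wordOf c = w}
        = ∑ x : Fin 3, Fintype.card {t : Fin n → Fin 3 // wordOf (Fin.cons x t) = w} := by
      rw [← Fintype.card_sigma]
      apply Fintype.card_congr
      exact (Equiv.subtypeEquiv (Fin.consEquiv fun _ => Fin 3)
        (fun p => by rw [show (Fin.consEquiv fun _ => Fin 3) p = Fin.cons p.1 p.2 from rfl])).symm.trans
        (Equiv.subtypeProdEquivSigmaSubtype fun x t => wordOf (Fin.cons x t) = w)
    rw [Ecard, Fin.sum_univ_three]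
    rcases w with _ | ⟨a, w'⟩
    · have h0 : Fintype.card {t : Fin n → Fin 3 // wordOf (Fin.cons 0 t) = []} = 0 :=
        card_false _ (fun t h => by rw [hcons] at h; simp at h)
      have h2 : Fintype.card {t : Fin n → Fin 3 // wordOf (Fin.cons 2 t) = []} = 0 :=
        card_false _ (fun t h => by rw [hcons] at h; simp at h)
      have h1 : Fintype.card {t : Fin n → Fin 3 // wordOf (Fin.cons 1 t) = []}
          = Fintype.card {t : Fin n → Fin 3 // wordOf t = []} :=
        Fintype.card_congr (Equiv.subtypeEquivRight (fun t => by rw [hcons]; simp))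
      rw [h0, h2, h1, IH [] (by simp)]
      simp [Nat.choose_self]
    · have ha : a ≠ 1 := fun h => hw (h ▸ (List.mem_cons_self (a := a) (l := w')))
      have hw' : (1 : Fin 3) ∉ w' := fun h => hw (List.mem_cons_of_mem a h)
      have h1 : Fintype.card {t : Fin n → Fin 3 // wordOf (Fin.cons 1 t) = a :: w'}
          = Fintype.card {t : Fin n → Fin 3 // wordOf t = a :: w'} :=
        Fintype.card_congr (Equiv.subtypeEquivRight (fun t => by rw [hcons]; simp))
      have key : ∀ x : Fin 3, x ≠ 1 →
          Fintype.card {t : Fin n → Fin 3 // wordOf (Fin.cons x t) = a :: w'}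
          = if x = a then Fintype.card {t : Fin n → Fin 3 // wordOf t = w'} else 0 := by
        intro x hx
        by_cases hxa : x = a
        · rw [if_pos hxa]
          exact Fintype.card_congr (Equiv.subtypeEquivRight (fun t => by
            rw [hcons, if_neg hx, hxa]; simp))
        · rw [if_neg hxa]
          exact card_false _ (fun t h => by
            rw [hcons, if_neg hx] at h
            exact hxa (by injection h with h1 h2))
      have h0 := key 0 (by decide)
      have h2 := key 2 (by decide)
      rw [h0, h2, h1, IH (a :: w') hw, IH w' hw']
      have hcases : a = 0 ∨ a = 2 := (by decide : ∀ b : Fin 3, b ≠ 1 → b = 0 ∨ b = 2) a ha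
      rcases hcases with h | h <;> subst h <;>
        simp only [List.length_cons, if_pos rfl, if_neg (by decide : (2:Fin 3) ≠ 0),
          if_neg (by decide : (0:Fin 3) ≠ 2), ite_self, Nat.add_zero, Nat.zero_add,
          if_neg, reduceIte]
      · exact pascal_aux n w'.length
      · rw [Nat.add_comm]
        exact pascal_aux n w'.length

lemma word_length {N : ℕ} (c : Fin N → Fin 3) :
    (wordOf c).length + (Finset.univ.filter (fun j => c j = 1)).card = N := by
  have h1 : (wordOf c).length = (Finset.univ.filter (fun j => ¬ (c j = 1))).card := by
    unfold wordOf
    have e0 : ((List.ofFn c).filter (· ≠ 1)).length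
        = Multiset.countP (fun x : Fin 3 => x ≠ 1) (↑(List.ofFn c) : Multiset (Fin 3)) := by
      rw [Multiset.coe_countP, List.countP_eq_length_filter]
    rw [e0, ← Fin.univ_val_map c, Multiset.countP_map]
    rfl
  rw [h1, Nat.add_comm, Finset.card_filter_add_card_filter_not]
  simp

lemma flip_symm {N : ℕ} : Symmetric (FlipStep (N := N) (k := 3)) := by
  rintro x y ⟨j, j', h0, hdiff, h1, h2, h3⟩
  refine ⟨j, j', h0, by rw [h1, h2]; exact hdiff.symm, h2.symm, h1.symm,
    fun i hi hi' => (h3 i hi hi').symm⟩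

theorem width3_sector_card {N M : ℕ} (c : Fin N → Fin 3)
    (hM : (Finset.univ.filter (fun j => c j = 1)).card = M) :
    Nat.card {c' : Fin N → Fin 3 // SameSector c c'} = Nat.choose N M := by
  have hfib : ∀ c' : Fin N → Fin 3, SameSector c c' ↔ wordOf c' = wordOf c := by
    intro c'
    constructor
    · intro h
      induction h with
      | refl => rfl
      | tail _ step ih => exact (flip_word step).trans ih
    · intro hw
      obtain ⟨d, rtg1, hcan1, hw1⟩ := reach_canon (mOf c) c rfl
      obtain ⟨d', rtg2, hcan2, hw2⟩ := reach_canon (mOf c') c' rfl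
      have hdd : d = d' := canon_unique hcan1 hcan2 (by rw [hw1, hw2, hw])
      exact rtg1.trans (hdd ▸ (@Relation.ReflTransGen.stdSymm _ _ ⟨flip_symm⟩ |>.symm _ _ rtg2))
  have hcard : Nat.card {c' : Fin N → Fin 3 // SameSector c c'}
      = Fintype.card {c' : Fin N → Fin 3 // wordOf c' = wordOf c} := by
    rw [Nat.card_congr (Equiv.subtypeEquivRight hfib), Nat.card_eq_fintype_card]
  have hnotin : (1 : Fin 3) ∉ wordOf c := by
    unfold wordOf
    simp
  have hlen := word_length c
  rw [hM] at hlen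
  rw [hcard, count_word N (wordOf c) hnotin, if_pos (by omega)]
  congr 1
  omega
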